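/- Let K be a field, B a commutative K-algebra, and D and E commutative B-algebras. Let H and H' be D-modules and M and M' be E-modules (all compatibly K- and B-modules via restriction of scalars). Regard H ⊗[B] M and H' ⊗[B] M' as D ⊗[B] E-modules via (d ⊗ e) • (h ⊗ m) = (d•h) ⊗ (e•m). Then there is a K-linear equivalence Φ : (H ⊗[B] M) ⊗[D ⊗[B] E] (H' ⊗[B] M') ≃ (H ⊗[D] H') ⊗[B] (M ⊗[E] M') determined by Φ((h ⊗ m) ⊗ (h' ⊗ m')) = (h ⊗ h') ⊗ (m ⊗ m') for all h ∈ H, h' ∈ H', m ∈ M, m' ∈ M'. -/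
import Mathlib


open TensorProduct

private theorem TP.addHom_ext {R M N P : Type*} [CommSemiring R] [AddCommMonoid M]
    [AddCommMonoid N] [AddCommMonoid P] [Module R M] [Module R N]
    {f g : M ⊗[R] N →+ P} (h : ∀ m n, f (m ⊗ₜ[R] n) = g (m ⊗ₜ[R] n)) : f = g :=
  AddMonoidHom.ext fun z => by
    induction z using TensorProduct.induction_on with
    | zero => simp
    | tmul m n => exact h m n
    | add x y hx hy => simp [hx, hy]

section Interchanger

set_option linter.unusedSectionVars false

variable {B D E : Type*} [CommRing B]
    [CommRing D] [Algebra B D]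
    [CommRing E] [Algebra B E]
    {H H' M M' : Type*}
    [AddCommGroup H] [Module D H] [Module B H]
    [IsScalarTower B D H]
    [AddCommGroup H'] [Module D H'] [Module B H']
    [IsScalarTower B D H']
    [AddCommGroup M] [Module E M] [Module B M]
    [IsScalarTower B E M]
    [AddCommGroup M'] [Module E M'] [Module B M']
    [IsScalarTower B E M']
    [Module (D ⊗[B] E) (H ⊗[B] M)]
    [Module (D ⊗[B] E) (H' ⊗[B] M')]

/-- innermost forward building block -/
private noncomputable def fwd3 (h : H) (m : M) (h' : H') :
    M' →+ (H ⊗[D] H') ⊗[B] (M ⊗[E] M') :=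
  AddMonoidHom.mk' (fun m' => (h ⊗ₜ[D] h') ⊗ₜ[B] (m ⊗ₜ[E] m'))
    fun m₁ m₂ => by simp [TensorProduct.tmul_add]

private noncomputable def fwd2 (h : H) (m : M) :
    H' →+ M' →+ (H ⊗[D] H') ⊗[B] (M ⊗[E] M') :=
  AddMonoidHom.mk' (fun h' => fwd3 (B := B) h m h') fun h₁ h₂ =>
    AddMonoidHom.ext fun m' => by
      simp [fwd3, TensorProduct.tmul_add, TensorProduct.add_tmul]

private noncomputable def fwdY (h : H) (m : M) :
    (H' ⊗[B] M') →+ (H ⊗[D] H') ⊗[B] (M ⊗[E] M') :=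
  TensorProduct.liftAddHom (fwd2 h m) fun b h' m' => by
    show (h ⊗ₜ[D] (b • h')) ⊗ₜ[B] (m ⊗ₜ[E] m')
        = (h ⊗ₜ[D] h') ⊗ₜ[B] (m ⊗ₜ[E] (b • m'))
    simp only [TensorProduct.tmul_smul, ← TensorProduct.smul_tmul']

private noncomputable def fwdM (h : H) :
    M →+ (H' ⊗[B] M') →+ (H ⊗[D] H') ⊗[B] (M ⊗[E] M') :=
  AddMonoidHom.mk' (fun m => fwdY h m) fun m₁ m₂ =>
    TP.addHom_ext fun h' m' => by
      show (h ⊗ₜ[D] h') ⊗ₜ[B] ((m₁ + m₂) ⊗ₜ[E] m') = _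
      simp [fwdY, fwd2, fwd3, TensorProduct.add_tmul, TensorProduct.tmul_add]

private noncomputable def fwdH :
    H →+ M →+ (H' ⊗[B] M') →+ (H ⊗[D] H') ⊗[B] (M ⊗[E] M') :=
  AddMonoidHom.mk' (fun h => fwdM (B := B) h) fun h₁ h₂ =>
    AddMonoidHom.ext fun m => TP.addHom_ext fun h' m' => by
      show ((h₁ + h₂) ⊗ₜ[D] h') ⊗ₜ[B] (m ⊗ₜ[E] m') = _
      simp [fwdM, fwdY, fwd2, fwd3, TensorProduct.tmul_add, TensorProduct.add_tmul]

private noncomputable def fwdX :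
    (H ⊗[B] M) →+ (H' ⊗[B] M') →+ (H ⊗[D] H') ⊗[B] (M ⊗[E] M') :=
  TensorProduct.liftAddHom fwdH fun b h m =>
    TP.addHom_ext fun h' m' => by
      show ((b • h) ⊗ₜ[D] h') ⊗ₜ[B] (m ⊗ₜ[E] m')
          = (h ⊗ₜ[D] h') ⊗ₜ[B] ((b • m) ⊗ₜ[E] m')
      simp only [TensorProduct.tmul_smul, ← TensorProduct.smul_tmul']

private theorem fwdX_tmul (h : H) (m : M) (h' : H') (m' : M') :
    (fwdX : (H ⊗[B] M) →+ (H' ⊗[B] M') →+ (H ⊗[D] H') ⊗[B] (M ⊗[E] M')) (h ⊗ₜ[B] m) (h' ⊗ₜ[B] m') = (h ⊗ₜ[D] h') ⊗ₜ[B] (m ⊗ₜ[E] m') := rfl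

private theorem fwdX_balanced
    (hsmul : ∀ (d : D) (e : E) (h : H) (m : M),
      (d ⊗ₜ[B] e) • (h ⊗ₜ[B] m) = (d • h) ⊗ₜ[B] (e • m))
    (hsmul' : ∀ (d : D) (e : E) (h' : H') (m' : M'),
      (d ⊗ₜ[B] e) • (h' ⊗ₜ[B] m') = (d • h') ⊗ₜ[B] (e • m')) :
    ∀ (s : D ⊗[B] E) (x : H ⊗[B] M) (y : H' ⊗[B] M'),
      (fwdX : (H ⊗[B] M) →+ (H' ⊗[B] M') →+ (H ⊗[D] H') ⊗[B] (M ⊗[E] M')) (s • x) y = (fwdX : (H ⊗[B] M) →+ (H' ⊗[B] M') →+ (H ⊗[D] H') ⊗[B] (M ⊗[E] M')) x (s • y) := by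
  intro s
  induction s using TensorProduct.induction_on with
  | zero => intro x y; simp
  | add s₁ s₂ hs₁ hs₂ => intro x y; simp [add_smul, hs₁, hs₂]
  | tmul d e =>
    intro x
    induction x using TensorProduct.induction_on with
    | zero => intro y; simp
    | add x₁ x₂ hx₁ hx₂ => intro y; simp [smul_add, hx₁, hx₂]
    | tmul h m =>
      intro y
      induction y using TensorProduct.induction_on with
      | zero => simp
      | add y₁ y₂ hy₁ hy₂ => simp [smul_add, hy₁, hy₂]
      | tmul h' m' =>
        rw [hsmul, hsmul', fwdX_tmul, fwdX_tmul]
        simp only [TensorProduct.smul_tmul]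

/-- The forward additive map. -/
private noncomputable def fwd
    (hsmul : ∀ (d : D) (e : E) (h : H) (m : M),
      (d ⊗ₜ[B] e) • (h ⊗ₜ[B] m) = (d • h) ⊗ₜ[B] (e • m))
    (hsmul' : ∀ (d : D) (e : E) (h' : H') (m' : M'),
      (d ⊗ₜ[B] e) • (h' ⊗ₜ[B] m') = (d • h') ⊗ₜ[B] (e • m')) :
    ((H ⊗[B] M) ⊗[D ⊗[B] E] (H' ⊗[B] M')) →+ (H ⊗[D] H') ⊗[B] (M ⊗[E] M') :=
  TensorProduct.liftAddHom fwdX (fwdX_balanced hsmul hsmul')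

private theorem fwd_tmul (hsmul) (hsmul') (h : H) (m : M) (h' : H') (m' : M') :
    fwd hsmul hsmul' ((h ⊗ₜ[B] m) ⊗ₜ[D ⊗[B] E] (h' ⊗ₜ[B] m'))
      = (h ⊗ₜ[D] h') ⊗ₜ[B] (m ⊗ₜ[E] m') := rfl

/- Backward direction. -/

private noncomputable def bwd3 (h : H) (h' : H') (m : M) :
    M' →+ (H ⊗[B] M) ⊗[D ⊗[B] E] (H' ⊗[B] M') :=
  AddMonoidHom.mk' (fun m' => (h ⊗ₜ[B] m) ⊗ₜ[D ⊗[B] E] (h' ⊗ₜ[B] m'))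
    fun m₁ m₂ => by simp [TensorProduct.tmul_add]

private noncomputable def bwd2 (h : H) (h' : H') :
    M →+ M' →+ (H ⊗[B] M) ⊗[D ⊗[B] E] (H' ⊗[B] M') :=
  AddMonoidHom.mk' (fun m => bwd3 h h' m) fun m₁ m₂ =>
    AddMonoidHom.ext fun m' => by
      simp [bwd3, TensorProduct.tmul_add, TensorProduct.add_tmul]

variable
    (hsmul : ∀ (d : D) (e : E) (h : H) (m : M),
      (d ⊗ₜ[B] e) • (h ⊗ₜ[B] m) = (d • h) ⊗ₜ[B] (e • m))
    (hsmul' : ∀ (d : D) (e : E) (h' : H') (m' : M'),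
      (d ⊗ₜ[B] e) • (h' ⊗ₜ[B] m') = (d • h') ⊗ₜ[B] (e • m'))

private noncomputable def bwdME (h : H) (h' : H') :
    (M ⊗[E] M') →+ (H ⊗[B] M) ⊗[D ⊗[B] E] (H' ⊗[B] M') :=
  TensorProduct.liftAddHom (bwd2 h h') fun e m m' => by
    show (h ⊗ₜ[B] (e • m)) ⊗ₜ[D ⊗[B] E] (h' ⊗ₜ[B] m')
        = (h ⊗ₜ[B] m) ⊗ₜ[D ⊗[B] E] (h' ⊗ₜ[B] (e • m'))
    have h₁ : h ⊗ₜ[B] (e • m) = ((1 : D) ⊗ₜ[B] e) • (h ⊗ₜ[B] m) := by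
      rw [hsmul]; simp
    have h₂ : h' ⊗ₜ[B] (e • m') = ((1 : D) ⊗ₜ[B] e) • (h' ⊗ₜ[B] m') := by
      rw [hsmul']; simp
    rw [h₁, h₂, TensorProduct.smul_tmul]

private noncomputable def bwdH' (h : H) :
    H' →+ (M ⊗[E] M') →+ (H ⊗[B] M) ⊗[D ⊗[B] E] (H' ⊗[B] M') :=
  AddMonoidHom.mk' (fun h' => bwdME hsmul hsmul' h h') fun h₁ h₂ =>
    TP.addHom_ext fun m m' => by
      show (h ⊗ₜ[B] m) ⊗ₜ[D ⊗[B] E] ((h₁ + h₂) ⊗ₜ[B] m') = _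
      simp [bwdME, bwd2, bwd3, TensorProduct.add_tmul, TensorProduct.tmul_add]

private noncomputable def bwdHH :
    H →+ H' →+ (M ⊗[E] M') →+ (H ⊗[B] M) ⊗[D ⊗[B] E] (H' ⊗[B] M') :=
  AddMonoidHom.mk' (fun h => bwdH' hsmul hsmul' h) fun h₁ h₂ =>
    AddMonoidHom.ext fun h' => TP.addHom_ext fun m m' => by
      show ((h₁ + h₂) ⊗ₜ[B] m) ⊗ₜ[D ⊗[B] E] (h' ⊗ₜ[B] m') = _
      simp [bwdH', bwdME, bwd2, bwd3, TensorProduct.tmul_add, TensorProduct.add_tmul]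

private noncomputable def bwdN :
    (H ⊗[D] H') →+ (M ⊗[E] M') →+ (H ⊗[B] M) ⊗[D ⊗[B] E] (H' ⊗[B] M') :=
  TensorProduct.liftAddHom (bwdHH hsmul hsmul') fun d h h' =>
    TP.addHom_ext fun m m' => by
      show ((d • h) ⊗ₜ[B] m) ⊗ₜ[D ⊗[B] E] (h' ⊗ₜ[B] m')
          = (h ⊗ₜ[B] m) ⊗ₜ[D ⊗[B] E] ((d • h') ⊗ₜ[B] m')
      have h₁ : (d • h) ⊗ₜ[B] m = (d ⊗ₜ[B] (1 : E)) • (h ⊗ₜ[B] m) := by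
        rw [hsmul]; simp
      have h₂ : (d • h') ⊗ₜ[B] m' = (d ⊗ₜ[B] (1 : E)) • (h' ⊗ₜ[B] m') := by
        rw [hsmul']; simp
      rw [h₁, h₂, TensorProduct.smul_tmul]

private theorem bwdN_tmul (h : H) (h' : H') (m : M) (m' : M') :
    bwdN hsmul hsmul' (h ⊗ₜ[D] h') (m ⊗ₜ[E] m')
      = (h ⊗ₜ[B] m) ⊗ₜ[D ⊗[B] E] (h' ⊗ₜ[B] m') := rfl

/-- The backward additive map. -/
private noncomputable def bwd :
    ((H ⊗[D] H') ⊗[B] (M ⊗[E] M')) →+ (H ⊗[B] M) ⊗[D ⊗[B] E] (H' ⊗[B] M') :=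
  TensorProduct.liftAddHom (bwdN hsmul hsmul') <| by
    intro b u t
    induction u using TensorProduct.induction_on with
    | zero => simp
    | add u₁ u₂ hu₁ hu₂ => simp [smul_add, hu₁, hu₂]
    | tmul h h' =>
      induction t using TensorProduct.induction_on with
      | zero => simp
      | add t₁ t₂ ht₁ ht₂ => simp [smul_add, ht₁, ht₂]
      | tmul m m' =>
        rw [TensorProduct.smul_tmul' (r := b) (m := h) (n := h'), bwdN_tmul,
          TensorProduct.smul_tmul' (r := b) (m := m) (n := m'), bwdN_tmul,
          TensorProduct.smul_tmul]

private theorem bwd_tmul (h : H) (m : M) (h' : H') (m' : M') :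
    bwd hsmul hsmul' ((h ⊗ₜ[D] h') ⊗ₜ[B] (m ⊗ₜ[E] m'))
      = (h ⊗ₜ[B] m) ⊗ₜ[D ⊗[B] E] (h' ⊗ₜ[B] m') := rfl

end Interchanger

/-- The interchanger: a `K`-linear equivalence
`(H ⊗[B] M) ⊗[D ⊗[B] E] (H' ⊗[B] M') ≃ (H ⊗[D] H') ⊗[B] (M ⊗[E] M')`
sending `(h ⊗ m) ⊗ (h' ⊗ m')` to `(h ⊗ h') ⊗ (m ⊗ m')`, where the
`D ⊗[B] E`-module structures on `H ⊗[B] M` and `H' ⊗[B] M'` are factorwise. -/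
theorem stmt_10 (K B D E : Type*) [Field K] [CommRing B] [Algebra K B]
    [CommRing D] [Algebra K D] [Algebra B D] [IsScalarTower K B D]
    [CommRing E] [Algebra K E] [Algebra B E] [IsScalarTower K B E]
    (H H' M M' : Type*)
    [AddCommGroup H] [Module D H] [Module B H] [Module K H]
    [IsScalarTower B D H] [IsScalarTower K B H] [IsScalarTower K D H]
    [AddCommGroup H'] [Module D H'] [Module B H'] [Module K H']
    [IsScalarTower B D H'] [IsScalarTower K B H'] [IsScalarTower K D H']
    [AddCommGroup M] [Module E M] [Module B M] [Module K M]
    [IsScalarTower B E M] [IsScalarTower K B M] [IsScalarTower K E M]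
    [AddCommGroup M'] [Module E M'] [Module B M'] [Module K M']
    [IsScalarTower B E M'] [IsScalarTower K B M'] [IsScalarTower K E M']
    [Module (D ⊗[B] E) (H ⊗[B] M)] [IsScalarTower K (D ⊗[B] E) (H ⊗[B] M)]
    [Module (D ⊗[B] E) (H' ⊗[B] M')] [IsScalarTower K (D ⊗[B] E) (H' ⊗[B] M')]
    (hsmul : ∀ (d : D) (e : E) (h : H) (m : M),
      (d ⊗ₜ[B] e) • (h ⊗ₜ[B] m) = (d • h) ⊗ₜ[B] (e • m))
    (hsmul' : ∀ (d : D) (e : E) (h' : H') (m' : M'),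
      (d ⊗ₜ[B] e) • (h' ⊗ₜ[B] m') = (d • h') ⊗ₜ[B] (e • m')) :
    ∃ Φ : ((H ⊗[B] M) ⊗[D ⊗[B] E] (H' ⊗[B] M')) ≃ₗ[K]
        ((H ⊗[D] H') ⊗[B] (M ⊗[E] M')),
      ∀ (h : H) (m : M) (h' : H') (m' : M'),
        Φ ((h ⊗ₜ[B] m) ⊗ₜ[D ⊗[B] E] (h' ⊗ₜ[B] m')) =
          (h ⊗ₜ[D] h') ⊗ₜ[B] (m ⊗ₜ[E] m') := by
  have left_inv : ∀ z, bwd hsmul hsmul' (fwd hsmul hsmul' z) = z := by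
    intro z
    induction z using TensorProduct.induction_on with
    | zero => simp
    | add z₁ z₂ h₁ h₂ => simp [map_add, h₁, h₂]
    | tmul x y =>
      induction x using TensorProduct.induction_on with
      | zero => simp
      | add x₁ x₂ h₁ h₂ => simp only [TensorProduct.add_tmul, map_add, h₁, h₂]
      | tmul h m =>
        induction y using TensorProduct.induction_on with
        | zero => simp
        | add y₁ y₂ h₁ h₂ => simp only [TensorProduct.tmul_add, map_add, h₁, h₂]
        | tmul h' m' => rw [fwd_tmul, bwd_tmul]
  have right_inv : ∀ t, fwd hsmul hsmul' (bwd hsmul hsmul' t) = t := by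
    intro t
    induction t using TensorProduct.induction_on with
    | zero => simp
    | add t₁ t₂ h₁ h₂ => simp [map_add, h₁, h₂]
    | tmul u v =>
      induction u using TensorProduct.induction_on with
      | zero => simp
      | add u₁ u₂ h₁ h₂ => simp only [TensorProduct.add_tmul, map_add, h₁, h₂]
      | tmul h h' =>
        induction v using TensorProduct.induction_on with
        | zero => simp
        | add v₁ v₂ h₁ h₂ => simp only [TensorProduct.tmul_add, map_add, h₁, h₂]
        | tmul m m' => rw [bwd_tmul, fwd_tmul]
  have map_smulK : ∀ (k : K) z,
      fwd hsmul hsmul' (k • z) = k • fwd hsmul hsmul' z := by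
    intro k z
    induction z using TensorProduct.induction_on with
    | zero =>
      have h0 : k • (0 : (H ⊗[B] M) ⊗[D ⊗[B] E] (H' ⊗[B] M')) = 0 :=
        TensorProduct.smul_zero k
      rw [h0, map_zero, smul_zero]
    | add z₁ z₂ h₁ h₂ =>
      have ha : k • (z₁ + z₂) = k • z₁ + k • z₂ := TensorProduct.smul_add k z₁ z₂
      rw [ha, map_add, h₁, h₂, map_add, smul_add]
    | tmul x y =>
      rw [TensorProduct.smul_tmul']
      induction x using TensorProduct.induction_on with
      | zero => simp
      | add x₁ x₂ h₁ h₂ =>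
        simp only [smul_add, TensorProduct.add_tmul, map_add, h₁, h₂]
      | tmul h m =>
        rw [TensorProduct.smul_tmul']
        induction y using TensorProduct.induction_on with
        | zero => simp
        | add y₁ y₂ h₁ h₂ =>
          simp only [TensorProduct.tmul_add, map_add, h₁, h₂, smul_add]
        | tmul h' m' =>
          rw [fwd_tmul, fwd_tmul, TensorProduct.smul_tmul',
            TensorProduct.smul_tmul']
  let e : ((H ⊗[B] M) ⊗[D ⊗[B] E] (H' ⊗[B] M')) ≃+
      ((H ⊗[D] H') ⊗[B] (M ⊗[E] M')) :=
    { toFun := fwd hsmul hsmul'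
      invFun := bwd hsmul hsmul'
      left_inv := left_inv
      right_inv := right_inv
      map_add' := map_add _ }
  refine ⟨e.toLinearEquiv map_smulK, fun h m h' m' => ?_⟩
  exact fwd_tmul hsmul hsmul' h m h' m'
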